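/- Let M(G) denote the minimum membership dimension over all good systems of categories for G. For any two connected graphs G and H, M(G × H) ≤ M(G) + M(H), where G × H is the Cartesian (box) product of graphs. -/

import Mathlib

open Finset SimpleGraph

variable {V : Type*}

def catDist [DecidableEq V] (S : Finset (Finset V)) (s t : V) : ℕ :=
  (S.filter fun C => t ∈ C ∧ s ∉ C).card

def IsGoodSystem [DecidableEq V] (G : SimpleGraph V) (S : Finset (Finset V)) : Prop :=
  (∀ C ∈ S, (G.induce (C : Set V)).Connected) ∧
    ∀ s t : V, s ≠ t → ∃ u, G.Adj s u ∧ catDist S u t < catDist S s t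

def memdim [DecidableEq V] [Fintype V] (S : Finset (Finset V)) : ℕ :=
  univ.sup fun v : V => (S.filter fun C => v ∈ C).card

noncomputable def graphDiam [Fintype V] (G : SimpleGraph V) : ℕ :=
  univ.sup fun p : V × V => G.dist p.1 p.2

noncomputable def minMemdim (V : Type*) [DecidableEq V] [Fintype V] (G : SimpleGraph V) : ℕ :=
  sInf {m | ∃ S : Finset (Finset V), IsGoodSystem G S ∧ memdim S = m}

/-!
Good systems `SG` for `G` and `SH` for `H` combine into the system of cylinders `C ×ˢ univ` and
`univ ×ˢ D` on `G □ H`. A cylinder separates `s` from `t` exactly when its base separates the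
corresponding coordinates, so category distances add, membership dimensions at most add, and one
descends from `s` towards `t` by moving in a coordinate where they differ.

Since `sInf ∅ = 0`, the minima must be shown to be attained, i.e. every connected graph needs a good
system. Take a parent map `p` of a breadth-first tree rooted at `r`; the categories are the
descendant sets of all vertices and the complements of those of the non-root vertices. Stepping from
`s` to `p s` if `s` is not an ancestor of `t`, and otherwise to the child of `s` on the way to `t`,
strictly shrinks the family of categories that contain `t` but not the current vertex.
-/

lemma catDist_lt_of_forall_imp [DecidableEq V] {S : Finset (Finset V)} {s t u : V}
    (hsub : ∀ C ∈ S, t ∈ C → u ∉ C → s ∉ C) (hwit : ∃ C ∈ S, t ∈ C ∧ s ∉ C ∧ u ∈ C) :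
    catDist S u t < catDist S s t := by
  obtain ⟨C, hCS, htC, hsC, huC⟩ := hwit
  refine Finset.card_lt_card (Finset.ssubset_iff_of_subset ?_ |>.mpr ⟨C, ?_, ?_⟩)
  · intro D hD
    simp only [Finset.mem_filter] at hD ⊢
    exact ⟨hD.1, hD.2.1, hsub D hD.1 hD.2.1 hD.2.2⟩
  · simp [hCS, htC, hsC]
  · simp [huC]

structure IsParentMap (G : SimpleGraph V) (r : V) (p : V → V) : Prop where
  map_root : p r = r
  adj : ∀ v, v ≠ r → G.Adj v (p v)
  dist_lt : ∀ v, v ≠ r → G.dist r (p v) < G.dist r v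

lemma SimpleGraph.Connected.exists_isParentMap {G : SimpleGraph V} (hG : G.Connected) (r : V) :
    ∃ p, IsParentMap G r p := by
  have step : ∀ v, v ≠ r → ∃ u, G.Adj v u ∧ G.dist r u < G.dist r v := by
    intro v hv
    obtain ⟨w, hw⟩ := hG.exists_walk_length_eq_dist v r
    cases w with
    | nil => exact absurd rfl hv
    | cons h q =>
      refine ⟨_, h, ?_⟩
      rw [G.dist_comm, G.dist_comm (u := r), ← hw, Walk.length_cons]
      exact Nat.lt_succ_of_le (dist_le q)
  classical
  choose! p hp using step
  refine ⟨fun v => if v = r then r else p v, by simp, fun v hv => ?_, fun v hv => ?_⟩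
  · simpa [hv] using (hp v hv).1
  · simpa [hv] using (hp v hv).2

def ancestors (p : V → V) (x : V) : Set V := Set.range fun n => p^[n] x

section Ancestors

variable {p : V → V}

lemma self_mem_ancestors (x : V) : x ∈ ancestors p x := ⟨0, rfl⟩

lemma ancestors_apply_subset (x : V) : ancestors p (p x) ⊆ ancestors p x := by
  rintro _ ⟨n, rfl⟩
  exact ⟨n + 1, rfl⟩

lemma mem_ancestors_apply {x y : V} (hy : y ∈ ancestors p x) (hyx : y ≠ x) :
    y ∈ ancestors p (p x) := by
  obtain ⟨_ | n, rfl⟩ := hy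
  · exact absurd rfl hyx
  · exact ⟨n, rfl⟩

lemma ancestors_subset_of_mem {x y : V} (hy : y ∈ ancestors p x) :
    ancestors p y ⊆ ancestors p x := by
  obtain ⟨m, rfl⟩ := hy
  rintro _ ⟨n, rfl⟩
  exact ⟨n + m, Function.iterate_add_apply p n m x⟩

variable {G : SimpleGraph V} {r : V}

lemma IsParentMap.ancestors_root (hp : IsParentMap G r p) : ancestors p r = {r} := by
  ext y
  simp only [ancestors, Set.mem_range, Set.mem_singleton_iff]
  exact ⟨fun ⟨n, hn⟩ => hn ▸ Function.iterate_fixed hp.map_root n, fun h => ⟨0, h.symm⟩⟩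

lemma IsParentMap.dist_le_of_mem_ancestors (hp : IsParentMap G r p) {x y : V}
    (hy : y ∈ ancestors p x) : G.dist r y ≤ G.dist r x := by
  obtain ⟨n, rfl⟩ := hy
  induction n with
  | zero => rfl
  | succ n ih =>
    simp only [Function.iterate_succ_apply'] at ih ⊢
    by_cases h : p^[n] x = r
    · rw [h, hp.map_root, dist_self]; exact Nat.zero_le _
    · exact (hp.dist_lt _ h).le.trans ih

lemma IsParentMap.notMem_ancestors_apply (hp : IsParentMap G r p) {x : V} (hx : x ≠ r) :
    x ∉ ancestors p (p x) :=
  fun h => (hp.dist_le_of_mem_ancestors h).not_gt (hp.dist_lt x hx)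

lemma IsParentMap.root_mem_ancestors (hp : IsParentMap G r p) (x : V) : r ∈ ancestors p x := by
  induction h : G.dist r x using Nat.strong_induction_on generalizing x with
  | _ n ih =>
    by_cases hx : x = r
    · exact hx ▸ self_mem_ancestors x
    · exact ancestors_apply_subset x (ih _ (h ▸ hp.dist_lt x hx) (p x) rfl)

lemma IsParentMap.exists_child (hp : IsParentMap G r p) {s t : V} (hs : s ∈ ancestors p t)
    (hst : s ≠ t) : ∃ c ∈ ancestors p t, c ≠ r ∧ p c = s := by
  obtain ⟨n, rfl⟩ := hs
  simp only at hst ⊢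
  induction n generalizing t with
  | zero => exact absurd rfl hst
  | succ n ih =>
    by_cases hn : p^[n] (p t) = p t
    · refine ⟨t, self_mem_ancestors t, fun ht => hst ?_, hn.symm⟩
      simp [ht, Function.iterate_fixed hp.map_root]
    · obtain ⟨c, hc, hcr, hpc⟩ := ih hn
      exact ⟨c, ancestors_apply_subset t hc, hcr, hpc⟩

end Ancestors

section TreeSystem

variable {G : SimpleGraph V} {r : V} {p : V → V}

lemma IsParentMap.reachable_iterate (hp : IsParentMap G r p) {X : Set V} :
    ∀ (n : ℕ) (x : V) (hX : ∀ k ≤ n, p^[k] x ∈ X),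
      (G.induce X).Reachable ⟨x, hX 0 n.zero_le⟩ ⟨p^[n] x, hX n le_rfl⟩
  | 0, _, _ => Reachable.refl _
  | n + 1, x, hX => by
    have hstep : (G.induce X).Reachable ⟨x, hX 0 (Nat.zero_le _)⟩ ⟨p x, hX 1 (by omega)⟩ := by
      by_cases hx : x = r
      · have : (⟨p x, hX 1 (by omega)⟩ : X) = ⟨x, hX 0 (Nat.zero_le _)⟩ :=
          Subtype.ext (by simp [hx, hp.map_root])
        exact this ▸ Reachable.refl _
      · exact Adj.reachable (G := G.induce X) (u := ⟨x, _⟩) (v := ⟨p x, _⟩) (hp.adj x hx)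
    exact hstep.trans (hp.reachable_iterate n (p x) fun k hk => hX (k + 1) (by omega))

lemma IsParentMap.induce_connected (hp : IsParentMap G r p) {X : Set V} {c : V} (hc : c ∈ X)
    (h : ∀ x ∈ X, ∃ n, p^[n] x = c ∧ ∀ k ≤ n, p^[k] x ∈ X) : (G.induce X).Connected := by
  rw [connected_iff_exists_forall_reachable]
  refine ⟨⟨c, hc⟩, fun ⟨x, hx⟩ => ?_⟩
  obtain ⟨n, rfl, hn⟩ := h x hx
  exact (hp.reachable_iterate n x hn).symm

variable [Fintype V]

open Classical in
noncomputable def descendants (p : V → V) (v : V) : Finset V :=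
  univ.filter (v ∈ ancestors p ·)

lemma mem_descendants {v x : V} : x ∈ descendants p v ↔ v ∈ ancestors p x := by
  simp [descendants]

lemma IsParentMap.induce_descendants_connected (hp : IsParentMap G r p) (v : V) :
    (G.induce (descendants p v : Set V)).Connected := by
  refine hp.induce_connected (c := v) (mem_descendants.2 (self_mem_ancestors v)) fun x hx => ?_
  obtain ⟨n, hn⟩ := mem_descendants.1 hx
  refine ⟨n, hn, fun k hk => mem_descendants.2 ⟨n - k, ?_⟩⟩
  simp only [← Function.iterate_add_apply, Nat.sub_add_cancel hk, hn]

variable [DecidableEq V]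

noncomputable def treeSystem (p : V → V) (r : V) : Finset (Finset V) :=
  univ.image (descendants p) ∪ (univ.erase r).image fun v => (descendants p v)ᶜ

lemma mem_treeSystem {C : Finset V} :
    C ∈ treeSystem p r ↔ (∃ v, descendants p v = C) ∨ ∃ v, v ≠ r ∧ (descendants p v)ᶜ = C := by
  simp [treeSystem]

lemma IsParentMap.induce_compl_descendants_connected (hp : IsParentMap G r p) {v : V}
    (hv : v ≠ r) : (G.induce ((descendants p v)ᶜ : Finset V)).Connected := by
  have hr : r ∈ ((descendants p v)ᶜ : Finset V) := by
    simpa [mem_descendants, hp.ancestors_root] using hv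
  refine hp.induce_connected hr fun x hx => ?_
  simp only [Finset.coe_compl, Set.mem_compl_iff, Finset.mem_coe, mem_descendants] at hx ⊢
  obtain ⟨n, hn⟩ := hp.root_mem_ancestors x
  exact ⟨n, hn, fun k _ hvk => hx (ancestors_subset_of_mem ⟨k, rfl⟩ hvk)⟩

lemma IsParentMap.catDist_treeSystem_child_lt (hp : IsParentMap G r p) {c t : V}
    (hc : c ∈ ancestors p t) (hcr : c ≠ r) :
    catDist (treeSystem p r) c t < catDist (treeSystem p r) (p c) t := by
  refine catDist_lt_of_forall_imp (fun C hC htC hcC => ?_) ⟨descendants p c, ?_, ?_, ?_, ?_⟩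
  · rcases mem_treeSystem.1 hC with ⟨v, rfl⟩ | ⟨v, -, rfl⟩
    · simp only [mem_descendants] at hcC ⊢
      exact fun h => hcC (ancestors_apply_subset c h)
    · simp only [Finset.mem_compl, mem_descendants, not_not] at htC hcC
      exact absurd (ancestors_subset_of_mem hc hcC) htC
  · exact mem_treeSystem.2 (Or.inl ⟨c, rfl⟩)
  · exact mem_descendants.2 hc
  · exact mt mem_descendants.1 (hp.notMem_ancestors_apply hcr)
  · exact mem_descendants.2 (self_mem_ancestors c)

lemma IsParentMap.catDist_treeSystem_apply_lt (hp : IsParentMap G r p) {s t : V}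
    (hst : s ∉ ancestors p t) :
    catDist (treeSystem p r) (p s) t < catDist (treeSystem p r) s t := by
  have hsr : s ≠ r := fun h => hst (h ▸ hp.root_mem_ancestors t)
  refine catDist_lt_of_forall_imp (fun C hC htC hsC => ?_) ⟨(descendants p s)ᶜ, ?_, ?_, ?_, ?_⟩
  · rcases mem_treeSystem.1 hC with ⟨v, rfl⟩ | ⟨v, -, rfl⟩
    · simp only [mem_descendants] at htC hsC ⊢
      intro hvs
      obtain rfl | hne := eq_or_ne v s
      · exact hst htC
      · exact hsC (mem_ancestors_apply hvs hne)
    · simp only [Finset.mem_compl, mem_descendants, not_not] at hsC ⊢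
      exact ancestors_apply_subset s hsC
  · exact mem_treeSystem.2 (Or.inr ⟨s, hsr, rfl⟩)
  · simpa [mem_descendants] using hst
  · simpa [mem_descendants] using self_mem_ancestors s
  · simpa [mem_descendants] using hp.notMem_ancestors_apply hsr

theorem IsParentMap.isGoodSystem_treeSystem (hp : IsParentMap G r p) :
    IsGoodSystem G (treeSystem p r) := by
  refine ⟨fun C hC => ?_, fun s t hst => ?_⟩
  · rcases mem_treeSystem.1 hC with ⟨v, rfl⟩ | ⟨v, hv, rfl⟩
    · exact hp.induce_descendants_connected v
    · exact hp.induce_compl_descendants_connected hv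
  · by_cases hs : s ∈ ancestors p t
    · obtain ⟨c, hc, hcr, rfl⟩ := hp.exists_child hs hst
      exact ⟨c, (hp.adj c hcr).symm, hp.catDist_treeSystem_child_lt hc hcr⟩
    · have hsr : s ≠ r := fun h => hs (h ▸ hp.root_mem_ancestors t)
      exact ⟨p s, hp.adj s hsr, hp.catDist_treeSystem_apply_lt hs⟩

end TreeSystem

theorem SimpleGraph.Connected.exists_isGoodSystem [Fintype V] [DecidableEq V]
    {G : SimpleGraph V} (hG : G.Connected) : ∃ S, IsGoodSystem G S := by
  obtain ⟨r⟩ := hG.nonempty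
  obtain ⟨p, hp⟩ := hG.exists_isParentMap r
  exact ⟨treeSystem p r, hp.isGoodSystem_treeSystem⟩

section Product

variable {W : Type*}

def SimpleGraph.boxProdInduceIso (G : SimpleGraph V) (H : SimpleGraph W) (s : Set V)
    (t : Set W) : (G □ H).induce (s ×ˢ t) ≃g G.induce s □ H.induce t where
  toEquiv := Equiv.Set.prod s t
  map_rel_iff' :=
    or_congr (and_congr Iff.rfl Subtype.ext_iff) (and_congr Iff.rfl Subtype.ext_iff)

lemma SimpleGraph.induce_prod_connected {G : SimpleGraph V} {H : SimpleGraph W} {s : Set V}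
    {t : Set W} (hs : (G.induce s).Connected) (ht : (H.induce t).Connected) :
    ((G □ H).induce (s ×ˢ t)).Connected :=
  (boxProdInduceIso G H s t).connected_iff.2 (connected_boxProd.2 ⟨hs, ht⟩)

lemma product_univ_injective [Fintype W] [Nonempty W] :
    Function.Injective (· ×ˢ univ : Finset V → Finset (V × W)) := by
  intro C D h
  ext v
  obtain ⟨w⟩ := ‹Nonempty W›
  simpa using Finset.ext_iff.1 h (v, w)

lemma univ_product_injective [Fintype V] [Nonempty V] :
    Function.Injective (univ ×ˢ · : Finset W → Finset (V × W)) := by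
  intro C D h
  ext w
  obtain ⟨v⟩ := ‹Nonempty V›
  simpa using Finset.ext_iff.1 h (v, w)

variable [Fintype V] [Fintype W] [DecidableEq V] [DecidableEq W]

def prodSystem (SG : Finset (Finset V)) (SH : Finset (Finset W)) : Finset (Finset (V × W)) :=
  SG.image (· ×ˢ univ) ∪ SH.image (univ ×ˢ ·)

lemma catDist_prodSystem [Nonempty V] [Nonempty W] (SG : Finset (Finset V))
    (SH : Finset (Finset W)) (s t : V × W) :
    catDist (prodSystem SG SH) s t = catDist SG s.1 t.1 + catDist SH s.2 t.2 := by
  rw [catDist, prodSystem, filter_union, card_union_of_disjoint, filter_image, filter_image,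
    card_image_of_injective _ product_univ_injective,
    card_image_of_injective _ univ_product_injective]
  · simp [catDist]
  · rw [Finset.disjoint_left]
    simp only [mem_filter, mem_image]
    rintro _ ⟨⟨C, -, rfl⟩, -, hsC⟩ ⟨⟨D, -, hDC⟩, htD, -⟩
    rw [← hDC, mem_product] at htD
    have hst : (s.1, t.2) ∈ C ×ˢ univ := hDC ▸ mem_product.2 ⟨mem_univ _, htD.2⟩
    exact hsC (mem_product.2 ⟨(mem_product.1 hst).1, mem_univ _⟩)

lemma memdim_prodSystem_le (SG : Finset (Finset V)) (SH : Finset (Finset W)) :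
    memdim (prodSystem SG SH) ≤ memdim SG + memdim SH := by
  refine Finset.sup_le fun x _ => ?_
  calc ((prodSystem SG SH).filter (x ∈ ·)).card
      ≤ (SG.filter (x.1 ∈ ·)).card + (SH.filter (x.2 ∈ ·)).card := by
        rw [prodSystem, filter_union, filter_image, filter_image]
        refine ((card_union_le _ _).trans (add_le_add card_image_le card_image_le)).trans ?_
        simp
    _ ≤ memdim SG + memdim SH :=
        add_le_add (le_sup (f := fun v => (SG.filter (v ∈ ·)).card) (mem_univ _))
          (le_sup (f := fun w => (SH.filter (w ∈ ·)).card) (mem_univ _))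

end Product

theorem IsGoodSystem.prodSystem {W : Type*} [Fintype V] [Fintype W] [DecidableEq V]
    [DecidableEq W] {G : SimpleGraph V} {H : SimpleGraph W} {SG : Finset (Finset V)}
    {SH : Finset (Finset W)} (hG : G.Connected) (hH : H.Connected) (hSG : IsGoodSystem G SG)
    (hSH : IsGoodSystem H SH) : IsGoodSystem (G □ H) (prodSystem SG SH) := by
  have := hG.nonempty
  have := hH.nonempty
  refine ⟨fun C hC => ?_, fun s t hst => ?_⟩
  · rcases mem_union.1 hC with hC | hC <;> obtain ⟨D, hD, rfl⟩ := mem_image.1 hC <;>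
      rw [coe_product, coe_univ]
    · exact induce_prod_connected (hSG.1 D hD) ((induceUnivIso H).connected_iff.2 hH)
    · exact induce_prod_connected ((induceUnivIso G).connected_iff.2 hG) (hSH.1 D hD)
  · by_cases h1 : s.1 = t.1
    · obtain ⟨u, hu, hlt⟩ := hSH.2 s.2 t.2 fun h2 => hst (Prod.ext h1 h2)
      refine ⟨(s.1, u), boxProd_adj.2 (Or.inr ⟨hu, rfl⟩), ?_⟩
      simp only [catDist_prodSystem]
      omega
    · obtain ⟨u, hu, hlt⟩ := hSG.2 s.1 t.1 h1
      refine ⟨(u, s.2), boxProd_adj.2 (Or.inl ⟨hu, rfl⟩), ?_⟩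
      simp only [catDist_prodSystem]
      omega

section MinMemdim

variable [Fintype V] [DecidableEq V] {G : SimpleGraph V}

lemma minMemdim_le {S : Finset (Finset V)} (hS : IsGoodSystem G S) : minMemdim V G ≤ memdim S :=
  Nat.sInf_le ⟨S, hS, rfl⟩

lemma SimpleGraph.Connected.exists_isGoodSystem_memdim_eq (hG : G.Connected) :
    ∃ S, IsGoodSystem G S ∧ memdim S = minMemdim V G := by
  obtain ⟨S, hS⟩ := hG.exists_isGoodSystem
  have hne : {m | ∃ S : Finset (Finset V), IsGoodSystem G S ∧ memdim S = m}.Nonempty :=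
    ⟨_, S, hS, rfl⟩
  exact Nat.sInf_mem hne

end MinMemdim

theorem stmt2 {W : Type*} [Fintype V] [DecidableEq V] [Fintype W] [DecidableEq W]
    (G : SimpleGraph V) (H : SimpleGraph W) (hG : G.Connected) (hH : H.Connected) :
    minMemdim (V × W) (G □ H) ≤ minMemdim V G + minMemdim W H := by
  obtain ⟨SG, hSG, hSGdim⟩ := hG.exists_isGoodSystem_memdim_eq
  obtain ⟨SH, hSH, hSHdim⟩ := hH.exists_isGoodSystem_memdim_eq
  calc minMemdim (V × W) (G □ H) ≤ memdim (prodSystem SG SH) :=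
        minMemdim_le (IsGoodSystem.prodSystem hG hH hSG hSH)
    _ ≤ memdim SG + memdim SH := memdim_prodSystem_le SG SH
    _ = minMemdim V G + minMemdim W H := by rw [hSGdim, hSHdim]
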